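/- Let R be a commutative ring, let p₁ ∈ R be a non zero-divisor, and Q₁ ∈ R[y]. Set F(x,y) = p₁·x + Q₁(y). Then F is a coordinate of R[x,y] if and only if the image of Q₁(y) in (R/p₁R)[y] is a coordinate of (R/p₁R)[y]. -/

import Mathlib

/-!
If `σ` is an automorphism with `σ y = p x + Q(y)`, then killing `x` and reducing modulo `p` sends
`σ⁻¹ y` to a right inverse `w` of `Q̄` for composition. Over any commutative ring such a one-sided
inverse is two-sided: modulo every prime `w` has degree one, so `w` is an affine polynomial with
unit slope plus a nilpotent polynomial, and composing with it is injective.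

Conversely, lift a compositional inverse of `Q̄` to `P ∈ R[y]`. Then `P(F) ≡ y` modulo `p`, so
`x ↦ (P(F) - y) / p`, `y ↦ F` is an endomorphism of `R[x, y]`, and its inverse is the
endomorphism built in the same way from `F' = -p x + P(y)` and `Q`.
-/

open MvPolynomial

namespace Polynomial

variable {S : Type*} [CommRing S]

theorem comp_mem_map_C {J : Ideal S} {p : S[X]} (hp : p ∈ J.map C) (q : S[X]) :
    p.comp q ∈ J.map C := by
  rw [← Ideal.mk_ker (I := J), ← ker_mapRingHom, RingHom.mem_ker, coe_mapRingHom] at hp ⊢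
  rw [map_comp, hp, zero_comp]

theorem comp_add_sub_comp_mem_map_C {J K : Ideal S} {p n : S[X]} (hp : p ∈ J.map C)
    (hn : n ∈ K.map C) (q : S[X]) : p.comp (q + n) - p.comp q ∈ (J * K).map C := by
  have hsum : p.comp (q + n) - p.comp q =
      ∑ i ∈ p.support, C (p.coeff i) * ((q + n) ^ i - q ^ i) := by
    simp only [mul_sub, Finset.sum_sub_distrib, comp_eq_sum_left]
    rfl
  rw [hsum, Ideal.map_mul]
  refine Ideal.sum_mem _ fun i _ ↦ Ideal.mul_mem_mul (Ideal.mem_map_of_mem _ ?_) ?_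
  · exact Ideal.mem_map_C_iff.mp hp i
  · obtain ⟨r, hr⟩ := sub_dvd_pow_sub_pow (q + n) q i
    rw [hr, add_sub_cancel_left]
    exact Ideal.mul_mem_right _ _ hn

/-- If `g ∘ (ℓ + n) = 0` and the coefficients of `g` lie in `I ^ k`, where `I` is the nilpotent
content ideal of `n`, then those of `g ∘ ℓ`, hence of `g = (g ∘ ℓ) ∘ ℓ'`, lie in `I ^ (k + 1)`. -/
theorem comp_left_injective_of_isNilpotent {ℓ ℓ' n : S[X]} (hℓ : ℓ.comp ℓ' = X)
    (hn : IsNilpotent n) : Function.Injective fun g : S[X] ↦ g.comp (ℓ + n) := by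
  set I := n.contentIdeal
  obtain ⟨K, hK⟩ : IsNilpotent I := (contentIdeal_FG n).isNilpotent_iff_le_nilradical.mpr <| by
    rw [contentIdeal_def, Ideal.span_le]
    intro c hc
    obtain ⟨i, -, rfl⟩ := mem_coeffs_iff.mp hc
    exact Polynomial.isNilpotent_iff.mp hn i
  have hnI : n ∈ I.map C := Ideal.mem_map_C_iff.mpr (coeff_mem_contentIdeal n)
  have hpow : ∀ g : S[X], g.comp (ℓ + n) = 0 → ∀ k, g ∈ (I ^ k).map C := by
    intro g hg k
    induction k with
    | zero => simp [Ideal.one_eq_top, Ideal.map_top]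
    | succ k ih =>
      have h := comp_add_sub_comp_mem_map_C ih hnI ℓ
      rw [hg, zero_sub, neg_mem_iff, ← pow_succ] at h
      simpa [comp_assoc, hℓ] using comp_mem_map_C h ℓ'
  intro g₁ g₂ h
  have h0 : (g₁ - g₂).comp (ℓ + n) = 0 := by simpa [sub_comp, sub_eq_zero] using h
  simpa [hK, sub_eq_zero] using hpow _ h0 K

theorem natDegree_eq_one_of_comp_eq_X [IsDomain S] {p q : S[X]} (h : p.comp q = X) :
    q.natDegree = 1 := by
  have h1 := natDegree_comp (p := p) (q := q)
  rw [h, natDegree_X] at h1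
  exact Nat.eq_one_of_mul_eq_one_left h1.symm

theorem isUnit_coeff_one_of_comp_eq_X {p q : S[X]} (h : p.comp q = X) : IsUnit (q.coeff 1) := by
  have hunit : IsUnit (derivative q) :=
    .of_mul_eq_one _ (by rw [← derivative_comp, h, derivative_X])
  simpa [coeff_derivative] using (coeff_isUnit_isNilpotent_of_isUnit hunit).1

theorem isNilpotent_coeff_of_comp_eq_X {p q : S[X]} (h : p.comp q = X) {j : ℕ} (hj : 2 ≤ j) :
    IsNilpotent (q.coeff j) := by
  rw [nilpotent_iff_mem_prime]
  intro P hP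
  have hdeg := natDegree_eq_one_of_comp_eq_X (p := p.map (Ideal.Quotient.mk P))
    (by rw [← map_comp, h, map_X])
  rw [← Ideal.Quotient.eq_zero_iff_mem, ← coeff_map]
  exact coeff_eq_zero_of_natDegree_lt (by omega)

theorem comp_eq_X_symm {p q : S[X]} (h : p.comp q = X) : q.comp p = X := by
  obtain ⟨u, hu⟩ := isUnit_coeff_one_of_comp_eq_X h
  set ℓ := C (u : S) * X + C (q.coeff 0)
  have hℓ : ℓ.comp (C (↑u⁻¹ : S) * (X - C (q.coeff 0))) = X := by
    simp [ℓ, ← C_mul, ← mul_assoc]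
  have hn : IsNilpotent (q - ℓ) := by
    refine Polynomial.isNilpotent_iff.mpr fun
      | 0 => by simp [ℓ]
      | 1 => by simp [ℓ, hu, coeff_C]
      | j + 2 => by
        simpa [ℓ, coeff_C, coeff_X] using isNilpotent_coeff_of_comp_eq_X h (j := j + 2) (by omega)
  apply comp_left_injective_of_isNilpotent hℓ hn
  simp only [add_sub_cancel, comp_assoc, h, comp_X, X_comp]

theorem exists_algEquiv_apply_X_eq_iff {p : S[X]} :
    (∃ e : S[X] ≃ₐ[S] S[X], e X = p) ↔ ∃ q : S[X], p.comp q = X := by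
  constructor
  · rintro ⟨e, rfl⟩
    refine ⟨e.symm X, ?_⟩
    rw [comp_eq_aeval, aeval_algEquiv, AlgHom.comp_apply, aeval_X_left_apply]
    exact e.symm_apply_apply X
  · rintro ⟨q, h⟩
    exact ⟨algEquivOfCompEqX p q h (comp_eq_X_symm h), by simp⟩

end Polynomial

namespace MvPolynomial

open scoped nonZeroDivisors

variable {R : Type*} [CommRing R]

theorem C_mul_left_cancel {σ : Type*} {p : R} (hp : p ∈ R⁰) {a b : MvPolynomial σ R}
    (h : C p * a = C p * b) : a = b := by
  ext d
  have hd := congr_arg (coeff d) h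
  simp only [coeff_C_mul] at hd
  exact (mul_cancel_left_mem_nonZeroDivisors hp).mp hd

theorem algHom_C_mul_X_add_aeval_X {σ A : Type*} [CommRing A] [Algebra R A]
    (ψ : MvPolynomial σ R →ₐ[R] A) (a : R) (i j : σ) (Q : Polynomial R) :
    ψ (C a * X i + Polynomial.aeval (X j) Q) =
      algebraMap R A a * ψ (X i) + Polynomial.aeval (ψ (X j)) Q := by
  rw [map_add, map_mul, ← algebraMap_eq, AlgHom.commutes, Polynomial.aeval_algHom_apply]

theorem exists_comp_eq_X_of_algEquiv_apply_X_one {p : R} {Q : Polynomial R}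
    (σ : MvPolynomial (Fin 2) R ≃ₐ[R] MvPolynomial (Fin 2) R)
    (hσ : σ (X 1) = C p * X 0 + Polynomial.aeval (X 1) Q) :
    ∃ w : Polynomial (R ⧸ Ideal.span {p}),
      (Q.map (Ideal.Quotient.mk _)).comp w = Polynomial.X := by
  set χ := (aeval ![0, Polynomial.X] :
    MvPolynomial (Fin 2) R →ₐ[R] Polynomial (R ⧸ Ideal.span {p})).comp σ.symm.toAlgHom
  refine ⟨χ (X 1), ?_⟩
  have h := algHom_C_mul_X_add_aeval_X χ p 0 1 Q
  have hy : χ (σ (X 1)) = Polynomial.X := by simp [χ]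
  have hp : algebraMap R (Polynomial (R ⧸ Ideal.span {p})) p = 0 := by
    simp [Polynomial.algebraMap_apply,
      Ideal.Quotient.eq_zero_iff_mem.mpr (Ideal.mem_span_singleton_self p)]
  rw [← hσ, hy, hp, zero_mul, zero_add] at h
  rw [Polynomial.comp_eq_aeval, ← Ideal.Quotient.algebraMap_eq, Polynomial.aeval_map_algebraMap, h]

theorem C_dvd_aeval_sub_X {σ : Type*} {p a : R} (ha : p ∣ a) (i j : σ) {Q P : Polynomial R}
    (h : (P.map (Ideal.Quotient.mk (Ideal.span {p}))).comp (Q.map (Ideal.Quotient.mk _)) =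
      Polynomial.X) :
    C p ∣ Polynomial.aeval (C a * X i + Polynomial.aeval (X j) Q) P - X j := by
  set μ := mapAlgHom (σ := σ) (Ideal.Quotient.mkₐ R (Ideal.span {p}))
  have ha : algebraMap R (MvPolynomial σ (R ⧸ Ideal.span {p})) a = 0 := by
    simp [Ideal.Quotient.eq_zero_iff_mem.mpr (Ideal.mem_span_singleton.mpr ha)]
  have hμ : μ (Polynomial.aeval (C a * X i + Polynomial.aeval (X j) Q) P - X j) = 0 := by
    rw [map_sub, ← Polynomial.aeval_algHom_apply, algHom_C_mul_X_add_aeval_X, ha, zero_mul,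
      zero_add]
    simp only [μ, mapAlgHom_apply, map_X]
    rw [← Polynomial.aeval_map_algebraMap (R ⧸ Ideal.span {p}) _ Q,
      ← Polynomial.aeval_map_algebraMap (R ⧸ Ideal.span {p}) _ P, ← Polynomial.aeval_comp,
      Ideal.Quotient.algebraMap_eq, h, Polynomial.aeval_X, sub_self]
  rw [C_dvd_iff_map_hom_eq_zero
    (Ideal.Quotient.mkₐ R (Ideal.span {p}) : R →+* R ⧸ Ideal.span {p}) p
    fun r ↦ Ideal.Quotient.eq_zero_iff_mem.trans Ideal.mem_span_singleton]
  simpa only [μ, mapAlgHom_apply] using hμ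

theorem aeval_comp_aeval_eq_id {p : R} (hp : p ∈ R⁰) {Q P : Polynomial R}
    {G G' : MvPolynomial (Fin 2) R}
    (hG : C p * G = Polynomial.aeval (C p * X 0 + Polynomial.aeval (X 1) Q) P - X 1)
    (hG' : C (-p) * G' = Polynomial.aeval (C (-p) * X 0 + Polynomial.aeval (X 1) P) Q - X 1) :
    (aeval ![G', C (-p) * X 0 + Polynomial.aeval (X 1) P]).comp
      (aeval ![G, C p * X 0 + Polynomial.aeval (X 1) Q]) = AlgHom.id R _ := by
  set ψ : MvPolynomial (Fin 2) R →ₐ[R] MvPolynomial (Fin 2) R :=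
    aeval ![G', C (-p) * X 0 + Polynomial.aeval (X 1) P]
  have hψF : ψ (C p * X 0 + Polynomial.aeval (X 1) Q) = X 1 := by
    rw [algHom_C_mul_X_add_aeval_X]
    simp only [ψ, aeval_X, Matrix.cons_val_zero, Matrix.cons_val_one, algebraMap_eq]
    rw [map_neg] at hG' ⊢
    linear_combination -hG'
  have hψG : ψ G = X 0 := by
    refine C_mul_left_cancel hp ?_
    calc C p * ψ G = ψ (C p * G) := by rw [map_mul, ← algebraMap_eq, AlgHom.commutes]
      _ = Polynomial.aeval (X 1) P - ψ (X 1) := by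
        rw [hG, map_sub, ← Polynomial.aeval_algHom_apply, hψF]
      _ = C p * X 0 := by
        simp only [ψ, aeval_X, Matrix.cons_val_one, Matrix.cons_val_zero, map_neg]
        ring
  ext1 i
  fin_cases i
  · simp [hψG]
  · simp [hψF]

end MvPolynomial

/-- Russell–Sathaye theorem: `p₁·x + Q₁(y)` is a coordinate of `R[x,y]` iff the image of
`Q₁` in `(R/p₁)[y]` is a coordinate of `(R/p₁)[y]`. -/
theorem russell_sathaye (R : Type*) [CommRing R] (p₁ : R)
    (hp₁ : p₁ ∈ nonZeroDivisors R) (Q₁ : Polynomial R) :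
    (∃ σ : MvPolynomial (Fin 2) R ≃ₐ[R] MvPolynomial (Fin 2) R,
        σ (X 1) = C p₁ * X 0 + Polynomial.aeval (X 1) Q₁) ↔
      (∃ σ : Polynomial (R ⧸ Ideal.span {p₁}) ≃ₐ[R ⧸ Ideal.span {p₁}]
          Polynomial (R ⧸ Ideal.span {p₁}),
        σ Polynomial.X = Q₁.map (Ideal.Quotient.mk (Ideal.span {p₁}))) := by
  rw [Polynomial.exists_algEquiv_apply_X_eq_iff]
  refine ⟨fun ⟨σ, hσ⟩ ↦ exists_comp_eq_X_of_algEquiv_apply_X_one σ hσ, fun ⟨w, hw⟩ ↦ ?_⟩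
  obtain ⟨P, rfl⟩ := Polynomial.map_surjective _ Ideal.Quotient.mk_surjective w
  obtain ⟨G, hG⟩ := C_dvd_aeval_sub_X dvd_rfl (0 : Fin 2) 1 (Polynomial.comp_eq_X_symm hw)
  obtain ⟨G', hG'⟩ := C_dvd_aeval_sub_X (dvd_neg.mpr (dvd_refl p₁)) (0 : Fin 2) 1 hw
  have hG'_neg : C (-p₁) * -G' =
      Polynomial.aeval (C (-p₁) * X 0 + Polynomial.aeval (X 1) P) Q₁ - X 1 := by
    rw [hG', map_neg, neg_mul_neg]
  have hneg : -p₁ ∈ nonZeroDivisors R :=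
    neg_one_mul p₁ ▸ mul_mem isUnit_neg_one.mem_nonZeroDivisors hp₁
  refine ⟨.ofAlgHom (aeval ![G, _]) (aeval ![-G', _]) ?_
    (aeval_comp_aeval_eq_id hp₁ hG.symm hG'_neg), by simp⟩
  simpa only [neg_neg] using
    aeval_comp_aeval_eq_id hneg hG'_neg (by simpa only [neg_neg] using hG.symm)
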